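/- arXiv:2003.12345 — 2 statements merged into one kernel-verified Lean document; each statement's English description precedes it below -/
import Mathlib

section
/- Let G be the graph with vertex set A₁ ∪ A₂ ∪ S as above (A₁, A₂ cliques of size n, edges sʲa₁ʲ, sʲa₂ʲ), but with S additionally turned into a clique. Then G is P₇-free, S is a minimal separator with full components A₁ and A₂, and every set X ⊆ A₁ ∪ A₂ with S ⊆ N[X] satisfies |X| ≥ n. -/
open SimpleGraph Set

variable {V : Type*}

/-- Open neighborhood of a set: vertices outside `A` with a neighbor in `A`. -/
def nbhdSet (G : SimpleGraph V) (A : Set V) : Set V :=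
  {v | v ∉ A ∧ ∃ u ∈ A, G.Adj u v}

/-- Union of closed neighborhoods of vertices of `X`. -/
def closedNbhd (G : SimpleGraph V) (X : Set V) : Set V :=
  X ∪ {v | ∃ u ∈ X, G.Adj u v}

/-- `A` is a connected component of `G - S`. -/
def IsCompOutside (G : SimpleGraph V) (S A : Set V) : Prop :=
  A.Nonempty ∧ Disjoint A S ∧ (G.induce A).Connected ∧
    ∀ u ∈ A, ∀ v, v ∉ A → v ∉ S → ¬ G.Adj u v

/-- `A` is a full component of `G - S`, i.e. `N(A) = S`. -/
def IsFullComp (G : SimpleGraph V) (S A : Set V) : Prop :=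
  IsCompOutside G S A ∧ nbhdSet G A = S

/-- `S` is a minimal separator: it has at least two full components. -/
def IsMinSep (G : SimpleGraph V) (S : Set V) : Prop :=
  ∃ A B : Set V, A ≠ B ∧ IsFullComp G S A ∧ IsFullComp G S B

/-- `f` is an induced copy of the path on `k` vertices in `G`. -/
def IsInducedPathMap (G : SimpleGraph V) {k : ℕ} (f : Fin k ↪ V) : Prop :=
  ∀ i j : Fin k, G.Adj (f i) (f j) ↔ ((i : ℕ) + 1 = (j : ℕ) ∨ (j : ℕ) + 1 = (i : ℕ))

/-- `G` is `P_t`-free: no induced path on `t` vertices. -/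
def PFree (t : ℕ) (G : SimpleGraph V) : Prop :=
  ¬ ∃ f : Fin t ↪ V, IsInducedPathMap G f

/-- `Ω` is a potential maximal clique. -/
def IsPMC (G : SimpleGraph V) (Ω : Set V) : Prop :=
  (∀ D : Set V, IsCompOutside G Ω D → nbhdSet G D ≠ Ω) ∧
  (∀ u ∈ Ω, ∀ v ∈ Ω, u ≠ v → ¬ G.Adj u v →
    ∃ D : Set V, IsCompOutside G Ω D ∧ u ∈ nbhdSet G D ∧ v ∈ nbhdSet G D)

/-- Vertex set: `A₁ ⊕ A₂ ⊕ S`, each a copy of `Fin n`. -/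
abbrev ExV (n : ℕ) := Fin n ⊕ Fin n ⊕ Fin n

/-- Adjacency of the second example: `A₁`, `A₂` and `S` are cliques, and `sʲ` is adjacent
exactly to `a₁ʲ` and `a₂ʲ` outside `S`. -/
def exAdj2 (n : ℕ) : ExV n → ExV n → Prop
  | Sum.inl i, Sum.inl j => i ≠ j
  | Sum.inr (Sum.inl i), Sum.inr (Sum.inl j) => i ≠ j
  | Sum.inr (Sum.inr i), Sum.inr (Sum.inr j) => i ≠ j
  | Sum.inl i, Sum.inr (Sum.inr j) => i = j
  | Sum.inr (Sum.inr i), Sum.inl j => i = j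
  | Sum.inr (Sum.inl i), Sum.inr (Sum.inr j) => i = j
  | Sum.inr (Sum.inr i), Sum.inr (Sum.inl j) => i = j
  | _, _ => False

def exGraph2 (n : ℕ) : SimpleGraph (ExV n) where
  Adj := exAdj2 n
  symm := ⟨by
    rintro (i | i | i) (j | j | j) h <;> simp only [exAdj2] at h ⊢ <;> omega⟩
  loopless := ⟨by
    rintro (i | i | i) h <;> simp only [exAdj2] at h <;> omega⟩

def ExA1 (n : ℕ) : Set (ExV n) := Set.range Sum.inl
def ExA2 (n : ℕ) : Set (ExV n) := Set.range (fun j => Sum.inr (Sum.inl j))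
def ExS (n : ℕ) : Set (ExV n) := Set.range (fun j => Sum.inr (Sum.inr j))

/-!
In an induced path on `2k + 1` vertices the `k + 1` vertices at even positions are pairwise
non-adjacent, so no two of them lie in a common clique; as `A₁`, `A₂`, `S` are three cliques
covering the graph, it has no induced `P₇`. The matchings `sʲa₁ʲ` and `sʲa₂ʲ` give
`N(A₁) = N(A₂) = S`, and a nonempty clique is connected. Finally the only neighbours of `sʲ`
in `A₁ ∪ A₂` are `a₁ʲ` and `a₂ʲ`, so a set `X ⊆ A₁ ∪ A₂` dominating `S` contains a vertex of
every index `j`.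
-/

theorem pFree_of_cliqueCover {G : SimpleGraph V} {k : ℕ} (p : V → Fin k)
    (hp : ∀ c, G.IsClique (p ⁻¹' {c})) : PFree (2 * k + 1) G := by
  rintro ⟨f, hf⟩
  let even : Fin (k + 1) → Fin (2 * k + 1) := fun i => ⟨2 * i, by omega⟩
  obtain ⟨a, b, hab, hpab⟩ :=
    Fintype.exists_ne_map_eq_of_card_lt (p ∘ f ∘ even) (by simp)
  have hne : f (even a) ≠ f (even b) := by
    refine f.injective.ne fun h => hab ?_
    simpa [even, Fin.ext_iff] using h
  have hadj : G.Adj (f (even a)) (f (even b)) := hp _ rfl hpab.symm hne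
  have hconsec := (hf _ _).mp hadj
  simp only [even] at hconsec
  omega

theorem isFullComp_of_isClique {G : SimpleGraph V} {S A : Set V} (hA : A.Nonempty)
    (hAS : Disjoint A S) (hclique : G.IsClique A) (hN : nbhdSet G A = S) :
    IsFullComp G S A := by
  refine ⟨⟨hA, hAS, ?_, ?_⟩, hN⟩
  · have : Nonempty A := hA.to_subtype
    rw [induce_eq_top.mpr hclique]
    exact connected_top
  · intro u hu v hvA hvS huv
    exact hvS (hN ▸ ⟨hvA, u, hu, huv⟩)

namespace ExGraph2

variable {n : ℕ}

def part : ExV n → Fin 3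
  | Sum.inl _ => 0
  | Sum.inr (Sum.inl _) => 1
  | Sum.inr (Sum.inr _) => 2

def index : ExV n → Fin n
  | Sum.inl j => j
  | Sum.inr (Sum.inl j) => j
  | Sum.inr (Sum.inr j) => j

theorem isClique_part (c : Fin 3) : (exGraph2 n).IsClique (part ⁻¹' {c}) := by
  rintro (i | i | i) hx (j | j | j) hy hne <;>
    simp_all [part, exGraph2, exAdj2] <;> omega

theorem pFree : PFree 7 (exGraph2 n) :=
  pFree_of_cliqueCover part isClique_part

theorem index_eq_of_adj {u : ExV n} {j : Fin n} (hu : u ∉ ExS n)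
    (h : (exGraph2 n).Adj u (Sum.inr (Sum.inr j))) : index u = j := by
  rcases u with i | i | i
  · exact h
  · exact h
  · exact absurd ⟨i, rfl⟩ hu

theorem isFullComp_exA1 (hn : 1 ≤ n) : IsFullComp (exGraph2 n) (ExS n) (ExA1 n) := by
  refine isFullComp_of_isClique ⟨Sum.inl ⟨0, hn⟩, ⟨_, rfl⟩⟩ ?_ ?_ ?_
  · simp [Set.disjoint_left, ExA1, ExS]
  · rintro _ ⟨i, rfl⟩ _ ⟨j, rfl⟩ hij
    exact fun h => hij (congrArg Sum.inl h)
  · ext (j | j | j) <;> simp [nbhdSet, ExA1, ExS, exGraph2, exAdj2]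

theorem isFullComp_exA2 (hn : 1 ≤ n) : IsFullComp (exGraph2 n) (ExS n) (ExA2 n) := by
  refine isFullComp_of_isClique ⟨Sum.inr (Sum.inl ⟨0, hn⟩), ⟨_, rfl⟩⟩ ?_ ?_ ?_
  · simp [Set.disjoint_left, ExA2, ExS]
  · rintro _ ⟨i, rfl⟩ _ ⟨j, rfl⟩ hij
    exact fun h => hij (congrArg (fun j => Sum.inr (Sum.inl j)) h)
  · ext (j | j | j) <;> simp [nbhdSet, ExA2, ExS, exGraph2, exAdj2]

theorem exA1_ne_exA2 (hn : 1 ≤ n) : ExA1 n ≠ ExA2 n := by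
  intro h
  obtain ⟨j, hj⟩ : (Sum.inl ⟨0, hn⟩ : ExV n) ∈ ExA2 n := h ▸ ⟨⟨0, hn⟩, rfl⟩
  simp at hj

theorem surjOn_index_of_dominating {X : Set (ExV n)} (hX : X ⊆ ExA1 n ∪ ExA2 n)
    (hS : ExS n ⊆ closedNbhd (exGraph2 n) X) : SurjOn index X univ := by
  have hXS : ∀ u ∈ X, u ∉ ExS n := by
    rintro u hu ⟨j, rfl⟩
    rcases hX hu with ⟨i, hi⟩ | ⟨i, hi⟩ <;> simp at hi
  intro j _
  rcases hS ⟨j, rfl⟩ with hj | ⟨u, hu, hadj⟩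
  · exact absurd ⟨j, rfl⟩ (hXS _ hj)
  · exact ⟨u, hu, index_eq_of_adj (hXS u hu) hadj⟩

end ExGraph2

/-- The second example is `P₇`-free, `S` is a minimal separator with full components
`A₁` and `A₂`, and every dominating set of `S` contained in `A₁ ∪ A₂` has size at least `n`. -/
theorem stmt_7 (n : ℕ) (hn : 1 ≤ n) :
    PFree 7 (exGraph2 n) ∧
      IsMinSep (exGraph2 n) (ExS n) ∧
      IsFullComp (exGraph2 n) (ExS n) (ExA1 n) ∧
      IsFullComp (exGraph2 n) (ExS n) (ExA2 n) ∧
      ∀ X : Finset (ExV n), ↑X ⊆ ExA1 n ∪ ExA2 n →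
        ExS n ⊆ closedNbhd (exGraph2 n) ↑X → n ≤ X.card := by
  have hA1 := ExGraph2.isFullComp_exA1 hn
  have hA2 := ExGraph2.isFullComp_exA2 hn
  refine ⟨ExGraph2.pFree, ⟨ExA1 n, ExA2 n, ExGraph2.exA1_ne_exA2 hn, hA1, hA2⟩, hA1, hA2, ?_⟩
  intro X hX hS
  simpa using Finset.card_le_card_of_surjOn (t := Finset.univ) ExGraph2.index
    (by simpa using ExGraph2.surjOn_index_of_dominating hX hS)
end

section
/- Every minimal separator of a graph G is contained in some potential maximal clique of G. -/
open SimpleGraph Set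

variable {V : Type*}

/-!
Complete `S` to a clique. In a finite graph every nonempty clique `K` lies in a potential maximal
clique: delete a vertex `a ∉ K` that still carries an edge, and lift a potential maximal clique
`Ω ⊇ K` of `G - a` back to `G`, where `Ω` or `Ω ∪ {a}` is one (Bouchitté–Todinca). A potential
maximal clique `Ω ⊇ S` of the completed graph meets at most one of the two full components of
`G - S`; the other is a component of `G - Ω` seeing all of `S`, which covers the pairs of `S` that
are non-adjacent in `G`. Everything else is unchanged, since the two graphs differ only inside `Ω`.
-/

namespace SimpleGraph

/-- `G - S`, kept on the vertex type `V`: the vertices of `S` remain, as isolated vertices. -/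
def deleteVerts (G : SimpleGraph V) (S : Set V) : SimpleGraph V where
  Adj x y := G.Adj x y ∧ x ∉ S ∧ y ∉ S
  symm := ⟨fun _ _ ⟨h, hx, hy⟩ => ⟨h.symm, hy, hx⟩⟩
  loopless := ⟨fun _ ⟨h, _, _⟩ => G.irrefl h⟩

def completeOn (G : SimpleGraph V) (S : Set V) : SimpleGraph V where
  Adj x y := G.Adj x y ∨ (x ≠ y ∧ x ∈ S ∧ y ∈ S)
  symm := ⟨fun _ _ h => h.imp (fun h => h.symm) fun ⟨hne, hx, hy⟩ => ⟨hne.symm, hy, hx⟩⟩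
  loopless := ⟨fun _ h => h.elim G.irrefl fun ⟨hne, _⟩ => hne rfl⟩

variable {G : SimpleGraph V} {S P : Set V} {a b x y : V}

lemma deleteVerts_le : G.deleteVerts S ≤ G := fun _ _ h => h.1

lemma induce_deleteVerts (hP : Disjoint P S) : (G.deleteVerts S).induce P = G.induce P := by
  ext u v
  exact ⟨And.left, fun h => ⟨h, Set.disjoint_left.mp hP u.2, Set.disjoint_left.mp hP v.2⟩⟩

lemma edgeSet_ncard_deleteVerts_lt [Finite V] (hab : G.Adj a b) :
    (G.deleteVerts {a}).edgeSet.ncard < G.edgeSet.ncard := by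
  refine Set.ncard_lt_ncard (edgeSet_ssubset_edgeSet.mpr (lt_of_le_of_ne deleteVerts_le ?_))
    (Set.toFinite _)
  intro h
  rw [← h] at hab
  exact hab.2.1 rfl

lemma IsClique.deleteVerts (hK : G.IsClique P) (haP : a ∉ P) :
    (G.deleteVerts {a}).IsClique P := fun _ hx _ hy hxy =>
  ⟨hK hx hy hxy, fun h => haP (h ▸ hx), fun h => haP (h ▸ hy)⟩

lemma completeOn_adj_of_notMem_left (hx : x ∉ S) : (G.completeOn S).Adj x y ↔ G.Adj x y :=
  ⟨fun h => h.resolve_right fun h => hx h.2.1, Or.inl⟩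

lemma completeOn_adj_of_notMem_right (hy : y ∉ S) : (G.completeOn S).Adj x y ↔ G.Adj x y := by
  rw [adj_comm, completeOn_adj_of_notMem_left hy, adj_comm]

lemma isClique_completeOn : (G.completeOn S).IsClique S := fun _ hx _ hy hxy =>
  Or.inr ⟨hxy, hx, hy⟩

lemma induce_completeOn (hP : Disjoint P S) : (G.completeOn S).induce P = G.induce P := by
  ext u v
  exact completeOn_adj_of_notMem_left (Set.disjoint_left.mp hP u.2)

end SimpleGraph

section Components

variable {G : SimpleGraph V} {S T Ω A D K : Set V} {x y : V}

lemma IsCompOutside.nonempty (h : IsCompOutside G S A) : A.Nonempty := h.1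

lemma IsCompOutside.disjoint (h : IsCompOutside G S A) : Disjoint A S := h.2.1

lemma IsCompOutside.connected (h : IsCompOutside G S A) : (G.induce A).Connected := h.2.2.1

lemma IsCompOutside.not_adj (h : IsCompOutside G S A) (hx : x ∈ A) (hy : y ∉ A) (hyS : y ∉ S) :
    ¬ G.Adj x y :=
  h.2.2.2 x hx y hy hyS

lemma IsCompOutside.nbhdSet_subset (h : IsCompOutside G S A) : nbhdSet G A ⊆ S :=
  fun _ ⟨hyA, _, hx, hxy⟩ => by_contra fun hyS => h.not_adj hx hyA hyS hxy

lemma IsCompOutside.of_subset (h : IsCompOutside G T A) (hTΩ : T ⊆ Ω) (hAΩ : Disjoint A Ω) :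
    IsCompOutside G Ω A :=
  ⟨h.nonempty, hAΩ, h.connected, fun _ hx _ hy hyΩ => h.not_adj hx hy fun hyT => hyΩ (hTΩ hyT)⟩

/-- The cut argument: a connected set leaving `A` must use an edge from `A` to a vertex
outside `A ∪ S`. -/
lemma IsCompOutside.subset_of_connected (hA : IsCompOutside G S A)
    (hK : (G.induce K).Connected) (hKS : Disjoint K S) (hxK : x ∈ K) (hxA : x ∈ A) : K ⊆ A := by
  intro y hyK
  by_contra hyA
  obtain ⟨w⟩ := hK.preconnected ⟨x, hxK⟩ ⟨y, hyK⟩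
  obtain ⟨d, -, hd₁, hd₂⟩ := w.exists_boundary_dart {z | z.1 ∈ A} hxA hyA
  exact hA.not_adj hd₁ hd₂ (Set.disjoint_left.mp hKS d.snd.2) d.adj

lemma IsCompOutside.eq_of_mem (hA : IsCompOutside G S A) (hD : IsCompOutside G S D)
    (hxA : x ∈ A) (hxD : x ∈ D) : A = D :=
  (hD.subset_of_connected hA.connected hA.disjoint hxA hxD).antisymm
    (hA.subset_of_connected hD.connected hD.disjoint hxD hxA)

lemma exists_isCompOutside_mem (hx : x ∉ S) : ∃ A, IsCompOutside G S A ∧ x ∈ A := by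
  set A := {y | (G.deleteVerts S).Reachable x y}
  have hAS : Disjoint A S := by
    refine Set.disjoint_left.mpr fun y ⟨w⟩ => ?_
    cases w.reverse with
    | nil => exact hx
    | cons h _ => exact h.2.1
  have hA : A = ((G.deleteVerts S).connectedComponentMk x).supp := by
    ext y
    simp only [A, mem_ofPred_eq, ConnectedComponent.mem_supp_iff, ConnectedComponent.eq,
      reachable_comm]
  refine ⟨A, ⟨⟨x, Reachable.refl x⟩, hAS, ?_, ?_⟩, Reachable.refl x⟩
  · rw [← induce_deleteVerts hAS, hA]
    exact (ConnectedComponent.maximal_connected_induce_supp _).1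
  · intro u hu v hvA hvS huv
    exact hvA (hu.trans (Adj.reachable ⟨huv, Set.disjoint_left.mp hAS hu, hvS⟩))

end Components

section Modifications

variable {G H : SimpleGraph V} {S Ω P : Set V} {a x : V}

lemma nbhdSet_mono (hHG : H ≤ G) : nbhdSet H P ⊆ nbhdSet G P :=
  fun _ ⟨hx, u, hu, hux⟩ => ⟨hx, u, hu, hHG hux⟩

lemma nbhdSet_deleteVerts (hP : Disjoint P S) : nbhdSet (G.deleteVerts S) P = nbhdSet G P \ S := by
  ext x
  refine ⟨fun ⟨hx, u, hu, hux⟩ => ⟨⟨hx, u, hu, hux.1⟩, hux.2.2⟩,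
    fun ⟨⟨hx, u, hu, hux⟩, hxS⟩ => ⟨hx, u, hu, hux, Set.disjoint_left.mp hP hu, hxS⟩⟩

lemma isCompOutside_deleteVerts_iff (hP : Disjoint P S) :
    IsCompOutside (G.deleteVerts S) Ω P ↔ IsCompOutside G (S ∪ Ω) P := by
  rw [IsCompOutside, IsCompOutside, induce_deleteVerts hP, disjoint_union_right]
  refine and_congr_right fun _ => ⟨fun ⟨hPΩ, hconn, hcl⟩ => ⟨⟨hP, hPΩ⟩, hconn, ?_⟩,
    fun ⟨⟨_, hPΩ⟩, hconn, hcl⟩ => ⟨hPΩ, hconn, ?_⟩⟩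
  · intro u hu y hy hySΩ huy
    exact hcl u hu y hy (fun h => hySΩ (Or.inr h))
      ⟨huy, Set.disjoint_left.mp hP hu, fun h => hySΩ (Or.inl h)⟩
  · intro u hu y hy hyΩ huy
    exact hcl u hu y hy (fun h => h.elim huy.2.2 hyΩ) huy.1

lemma IsCompOutside.notMem_of_deleteVerts (hP : IsCompOutside (G.deleteVerts {a}) Ω P)
    (hx : x ∈ nbhdSet (G.deleteVerts {a}) P) : a ∉ P := by
  obtain ⟨-, u, hu, hux⟩ := hx
  intro ha
  obtain ⟨w⟩ := hP.connected.preconnected ⟨a, ha⟩ ⟨u, hu⟩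
  cases w with
  | nil => exact hux.2.1 rfl
  | cons h _ => exact h.2.1 rfl

lemma nbhdSet_completeOn (hP : Disjoint P S) : nbhdSet (G.completeOn S) P = nbhdSet G P := by
  ext x
  refine and_congr_right fun _ => exists_congr fun u => and_congr_right fun hu => ?_
  exact completeOn_adj_of_notMem_left (Set.disjoint_left.mp hP hu)

lemma isCompOutside_completeOn_iff (hSΩ : S ⊆ Ω) :
    IsCompOutside (G.completeOn S) Ω P ↔ IsCompOutside G Ω P := by
  refine and_congr_right fun _ => and_congr_right fun hPΩ => ?_
  have hPS : Disjoint P S := hPΩ.mono_right hSΩ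
  rw [induce_completeOn hPS]
  refine and_congr_right fun _ => forall₂_congr fun u hu => ?_
  simp only [completeOn_adj_of_notMem_left (Set.disjoint_left.mp hPS hu)]

end Modifications

section Lifting

variable {G : SimpleGraph V} {Ω C F : Set V} {a m x : V}

/-- The cut argument inside `C`: the component of `m` in `G - (insert a Ω)` cannot contain `a`,
so the first edge by which a walk from `m` to `a` inside `C` leaves it must end at `a`. -/
lemma exists_isCompOutside_insert_of_adj (hC : IsCompOutside G Ω C) (haC : a ∈ C) (hmC : m ∈ C)
    (hma : m ≠ a) (hx : x ∈ Ω) (hmx : G.Adj m x) :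
    ∃ D, IsCompOutside G (insert a Ω) D ∧ x ∈ nbhdSet G D ∧ a ∈ nbhdSet G D := by
  have hmΩ : m ∉ insert a Ω := fun h => h.elim hma (Set.disjoint_left.mp hC.disjoint hmC)
  obtain ⟨D, hD, hmD⟩ := exists_isCompOutside_mem (G := G) hmΩ
  have hDC : D ⊆ C := hC.subset_of_connected hD.connected
    (hD.disjoint.mono_right (subset_insert a Ω)) hmD hmC
  have hDΩ (y) (hyD : y ∈ D) : y ∉ insert a Ω := Set.disjoint_left.mp hD.disjoint hyD
  obtain ⟨w⟩ := hC.connected.preconnected ⟨m, hmC⟩ ⟨a, haC⟩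
  obtain ⟨d, -, hd₁, hd₂⟩ := w.exists_boundary_dart {z | z.1 ∈ D} hmD (hDΩ a · (mem_insert a Ω))
  have hd : d.snd.1 ∈ insert a Ω := by_contra fun h => hD.not_adj hd₁ hd₂ h d.adj
  have hda : d.snd.1 = a :=
    hd.resolve_right (Set.disjoint_left.mp hC.disjoint d.snd.2)
  refine ⟨D, hD, ⟨fun h => hDΩ x h (mem_insert_of_mem a hx), m, hmD, hmx⟩, ?_⟩
  exact hda ▸ ⟨hd₂, d.fst, hd₁, d.adj⟩

lemma IsPMC.of_deleteVerts (h : IsPMC (G.deleteVerts {a}) Ω) (haΩ : a ∉ Ω)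
    (hF : IsCompOutside G Ω F) (haF : a ∈ F) (hFΩ : nbhdSet G F ≠ Ω) : IsPMC G Ω := by
  refine ⟨fun P hP => ?_, fun p hp q hq hpq hnadj => ?_⟩
  · by_cases haP : a ∈ P
    · rwa [hP.eq_of_mem hF haP haF]
    · have hPa : Disjoint P {a} := disjoint_singleton_right.mpr haP
      have hP' : IsCompOutside (G.deleteVerts {a}) Ω P :=
        (isCompOutside_deleteVerts_iff hPa).mpr
          (hP.of_subset subset_union_right (disjoint_union_right.mpr ⟨hPa, hP.disjoint⟩))
      have := h.1 P hP'
      rwa [nbhdSet_deleteVerts hPa,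
        sdiff_singleton_eq_self fun ha => haΩ (hP.nbhdSet_subset ha)] at this
  · obtain ⟨K, hK, hpK, hqK⟩ := h.2 p hp q hq hpq fun h => hnadj h.1
    obtain ⟨k, hk⟩ := hK.nonempty
    obtain ⟨D, hD, hkD⟩ := exists_isCompOutside_mem (G := G)
      (Set.disjoint_left.mp hK.disjoint hk)
    have hKD : K ⊆ D :=
      hD.subset_of_connected (hK.connected.mono fun _ _ h => deleteVerts_le h) hK.disjoint hk hkD
    obtain ⟨-, up, hup, hupp⟩ := nbhdSet_mono deleteVerts_le hpK
    obtain ⟨-, uq, huq, huqq⟩ := nbhdSet_mono deleteVerts_le hqK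
    exact ⟨D, hD, ⟨Set.disjoint_right.mp hD.disjoint hp, up, hKD hup, hupp⟩,
      ⟨Set.disjoint_right.mp hD.disjoint hq, uq, hKD huq, huqq⟩⟩

lemma IsPMC.insert_of_deleteVerts (h : IsPMC (G.deleteVerts {a}) Ω) (haΩ : a ∉ Ω)
    (hF : IsCompOutside G Ω F) (haF : a ∈ F) (hFΩ : nbhdSet G F = Ω) :
    IsPMC G (insert a Ω) := by
  have hcov_a (p) (hp : p ∈ Ω) (hpa : ¬ G.Adj p a) :
      ∃ D, IsCompOutside G (insert a Ω) D ∧ p ∈ nbhdSet G D ∧ a ∈ nbhdSet G D := by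
    obtain ⟨-, m, hmF, hmp⟩ := hFΩ ▸ hp
    exact exists_isCompOutside_insert_of_adj hF haF hmF (by rintro rfl; exact hpa hmp.symm)
      hp hmp
  refine ⟨fun P hP hPΩ => ?_, fun p hp q hq hpq hnadj => ?_⟩
  · have hPa : Disjoint P {a} :=
      disjoint_singleton_right.mpr (Set.disjoint_right.mp hP.disjoint (mem_insert a Ω))
    refine h.1 P ((isCompOutside_deleteVerts_iff hPa).mpr (singleton_union ▸ hP)) ?_
    rw [nbhdSet_deleteVerts hPa, hPΩ, insert_sdiff_self_of_notMem haΩ]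
  rcases hp with rfl | hp <;> rcases hq with rfl | hq
  · exact absurd rfl hpq
  · obtain ⟨D, hD, hqD, hpD⟩ := hcov_a q hq fun h => hnadj h.symm
    exact ⟨D, hD, hpD, hqD⟩
  · exact hcov_a p hp hnadj
  · obtain ⟨K, hK, hpK, hqK⟩ := h.2 p hp q hq hpq fun h => hnadj h.1
    have hKa : Disjoint K {a} := disjoint_singleton_right.mpr (hK.notMem_of_deleteVerts hpK)
    exact ⟨K, singleton_union ▸ (isCompOutside_deleteVerts_iff hKa).mp hK,
      nbhdSet_mono deleteVerts_le hpK, nbhdSet_mono deleteVerts_le hqK⟩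

lemma IsPMC.lift_deleteVerts (h : IsPMC (G.deleteVerts {a}) Ω) (haΩ : a ∉ Ω) :
    IsPMC G Ω ∨ IsPMC G (insert a Ω) := by
  obtain ⟨F, hF, haF⟩ := exists_isCompOutside_mem (G := G) haΩ
  by_cases hFΩ : nbhdSet G F = Ω
  · exact Or.inr (h.insert_of_deleteVerts haΩ hF haF hFΩ)
  · exact Or.inl (h.of_deleteVerts haΩ hF haF hFΩ)

end Lifting

section Cliques

variable {G : SimpleGraph V} {K Ω : Set V} {a : V}

lemma IsPMC.subset_singleton_of_isolated (h : IsPMC G Ω) (haΩ : a ∈ Ω) (ha : ∀ b, ¬ G.Adj a b) :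
    Ω ⊆ {a} := by
  intro y hy
  by_contra hya
  obtain ⟨D, -, ⟨-, u, -, hua⟩, -⟩ := h.2 a haΩ y hy (Ne.symm hya) (ha y)
  exact ha u hua.symm

lemma isPMC_of_isClique_of_forall_adj_mem (hK : G.IsClique K) (hKne : K.Nonempty)
    (hedges : ∀ x y, G.Adj x y → x ∈ K) : IsPMC G K := by
  refine ⟨fun D hD hDK => ?_, fun p hp q hq hpq hnadj => absurd (hK hp hq hpq) hnadj⟩
  obtain ⟨k, hk⟩ := hKne
  obtain ⟨-, u, huD, huk⟩ := hDK ▸ hk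
  exact Set.disjoint_left.mp hD.disjoint huD (hedges u k huk)

theorem exists_isPMC_superset_of_isClique [Finite V] (hK : G.IsClique K) (hKne : K.Nonempty) :
    ∃ Ω, IsPMC G Ω ∧ K ⊆ Ω := by
  induction hn : G.edgeSet.ncard using Nat.strong_induction_on generalizing G with
  | _ n ih =>
  by_cases hout : ∃ a ∉ K, ∃ b, G.Adj a b
  · obtain ⟨a, haK, b, hab⟩ := hout
    obtain ⟨Ω, hΩ, hKΩ⟩ :=
      ih _ (hn ▸ edgeSet_ncard_deleteVerts_lt hab) (hK.deleteVerts haK) rfl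
    obtain ⟨k, hk⟩ := hKne
    have haΩ : a ∉ Ω := fun haΩ =>
      haK (hΩ.subset_singleton_of_isolated haΩ (fun _ h => h.2.1 rfl) (hKΩ hk) ▸ hk)
    rcases hΩ.lift_deleteVerts haΩ with hΩ' | hΩ'
    · exact ⟨Ω, hΩ', hKΩ⟩
    · exact ⟨insert a Ω, hΩ', hKΩ.trans (subset_insert a Ω)⟩
  · push Not at hout
    refine ⟨K, isPMC_of_isClique_of_forall_adj_mem hK hKne fun x y hxy => ?_, subset_rfl⟩
    exact by_contra fun hx => hout x hx y hxy

end Cliques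

section Completion

variable {G : SimpleGraph V} {S Ω A B : Set V}

lemma IsCompOutside.subset_of_mem_nbhdSet {C D : Set V} {c : V} (hC : IsCompOutside G S C)
    (hD : IsCompOutside G Ω D) (hSΩ : S ⊆ Ω) (hc : c ∈ C) (hcD : c ∈ nbhdSet G D) : D ⊆ C := by
  obtain ⟨-, d, hd, hdc⟩ := hcD
  have hDS : Disjoint D S := hD.disjoint.mono_right hSΩ
  have hdC : d ∈ C := by_contra fun hdC =>
    hC.not_adj hc hdC (Set.disjoint_left.mp hDS hd) hdc.symm
  exact hC.subset_of_connected hD.connected hDS hd hdC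

/-- Vertices `a ∈ A ∩ Ω` and `b ∈ B ∩ Ω` are non-adjacent, yet a component of `G - Ω` seeing both
would lie inside both `A` and `B`. -/
lemma IsPMC.disjoint_or_disjoint_of_completeOn (h : IsPMC (G.completeOn S) Ω) (hSΩ : S ⊆ Ω)
    (hA : IsCompOutside G S A) (hB : IsCompOutside G S B) (hAB : A ≠ B) :
    Disjoint A Ω ∨ Disjoint B Ω := by
  rw [or_iff_not_imp_left, Set.not_disjoint_iff, Set.disjoint_left]
  rintro ⟨a, haA, haΩ⟩ b hbB hbΩ
  have hbA : b ∉ A := fun hbA => hAB (hA.eq_of_mem hB hbA hbB)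
  have haS : a ∉ S := Set.disjoint_left.mp hA.disjoint haA
  have hbS : b ∉ S := Set.disjoint_left.mp hB.disjoint hbB
  obtain ⟨D, hD, haD, hbD⟩ := h.2 a haΩ b hbΩ (fun h => hbA (h ▸ haA))
    (by rw [completeOn_adj_of_notMem_left haS]; exact hA.not_adj haA hbA hbS)
  rw [isCompOutside_completeOn_iff hSΩ] at hD
  rw [nbhdSet_completeOn (hD.disjoint.mono_right hSΩ)] at haD hbD
  obtain ⟨d, hd⟩ := hD.nonempty
  exact hAB (hA.eq_of_mem hB (hA.subset_of_mem_nbhdSet hD hSΩ haA haD hd)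
    (hB.subset_of_mem_nbhdSet hD hSΩ hbB hbD hd))

lemma IsPMC.of_completeOn (h : IsPMC (G.completeOn S) Ω) (hSΩ : S ⊆ Ω)
    (hA : IsFullComp G S A) (hB : IsFullComp G S B) (hAB : A ≠ B) : IsPMC G Ω := by
  have hcov (C) (hC : IsFullComp G S C) (hCΩ : Disjoint C Ω) (p q) (hp : p ∈ S) (hq : q ∈ S) :
      ∃ D, IsCompOutside G Ω D ∧ p ∈ nbhdSet G D ∧ q ∈ nbhdSet G D :=
    ⟨C, hC.1.of_subset hSΩ hCΩ, hC.2 ▸ hp, hC.2 ▸ hq⟩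
  refine ⟨fun D hD => ?_, fun p hp q hq hpq hnadj => ?_⟩
  · rw [← nbhdSet_completeOn (hD.disjoint.mono_right hSΩ)]
    exact h.1 D ((isCompOutside_completeOn_iff hSΩ).mpr hD)
  by_cases hadj : (G.completeOn S).Adj p q
  · have hpS : p ∈ S := by_contra fun hpS => hnadj ((completeOn_adj_of_notMem_left hpS).mp hadj)
    have hqS : q ∈ S := by_contra fun hqS => hnadj ((completeOn_adj_of_notMem_right hqS).mp hadj)
    rcases h.disjoint_or_disjoint_of_completeOn hSΩ hA.1 hB.1 hAB with hAΩ | hBΩ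
    · exact hcov A hA hAΩ p q hpS hqS
    · exact hcov B hB hBΩ p q hpS hqS
  · obtain ⟨D, hD, hpD, hqD⟩ := h.2 p hp q hq hpq hadj
    rw [isCompOutside_completeOn_iff hSΩ] at hD
    rw [nbhdSet_completeOn (hD.disjoint.mono_right hSΩ)] at hpD hqD
    exact ⟨D, hD, hpD, hqD⟩

end Completion

/-- Every minimal separator is contained in some potential maximal clique. -/
theorem stmt_19 [Fintype V] (G : SimpleGraph V) (S : Set V) (hS : IsMinSep G S) :
    ∃ Ω : Set V, IsPMC G Ω ∧ S ⊆ Ω := by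
  obtain ⟨A, B, hAB, hA, hB⟩ := hS
  obtain ⟨K, hK, hKne, hSK⟩ : ∃ K, (G.completeOn S).IsClique K ∧ K.Nonempty ∧ S ⊆ K := by
    rcases S.eq_empty_or_nonempty with rfl | hSne
    · obtain ⟨a, -⟩ := hA.1.nonempty
      exact ⟨{a}, isClique_singleton a, singleton_nonempty a, empty_subset _⟩
    · exact ⟨S, isClique_completeOn, hSne, subset_rfl⟩
  obtain ⟨Ω, hΩ, hKΩ⟩ := exists_isPMC_superset_of_isClique hK hKne
  exact ⟨Ω, hΩ.of_completeOn (hSK.trans hKΩ) hA hB hAB, hSK.trans hKΩ⟩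
end
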